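/- arXiv:2404.09720 — 2 statements merged into one kernel-verified Lean document; each statement's English description precedes it below -/
import Mathlib

section
/- Let F ⊆ binom([n],k) and 1 ≤ x < y ≤ n. If |N_F(x)| ≥ |N_F(y)| and the family F̃ := S_{x,y}(F) is different from F, then Σ_{i∈[n]} |N_{F̃}(i)|² > Σ_{i∈[n]} |N_F(i)|². -/
/-- The `(x,y)`-shift of a single edge `A` with respect to the family `F`. -/
def shiftEdge (x y : ℕ) (F : Finset (Finset ℕ)) (A : Finset ℕ) : Finset ℕ :=
  if y ∈ A ∧ x ∉ A ∧ insert x (A.erase y) ∉ F then insert x (A.erase y) else A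

/-- The `(x,y)`-shift of a family `F`. -/
def shiftFam (x y : ℕ) (F : Finset (Finset ℕ)) : Finset (Finset ℕ) :=
  F.image (shiftEdge x y F)

/-- The matching number: the largest size of a pairwise-disjoint subfamily. -/
noncomputable def matchingNumber (F : Finset (Finset ℕ)) : ℕ :=
  sSup {m | ∃ M ⊆ F, M.card = m ∧ (M : Set (Finset ℕ)).PairwiseDisjoint id}

/-- `F` is non-trivial on `[n]`: no vertex of `[n] = {1,…,n}` is isolated. -/
def NonTrivial (n : ℕ) (F : Finset (Finset ℕ)) : Prop :=
  ∀ v ∈ Finset.Icc 1 n, ∃ A ∈ F, v ∈ A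

/-- `F` is shifted on `Y`: all `(x,y)`-shifts with `x < y` in `Y` fix `F`. -/
def ShiftedOn (Y : Finset ℕ) (F : Finset (Finset ℕ)) : Prop :=
  ∀ x ∈ Y, ∀ y ∈ Y, x < y → shiftFam x y F = F

/-- The clique number of the `k`-graph `F` on `[n]`. -/
noncomputable def cliqueNum (n k : ℕ) (F : Finset (Finset ℕ)) : ℕ :=
  sSup {m | ∃ U ⊆ Finset.Icc 1 n, U.card = m ∧ Finset.powersetCard k U ⊆ F}

/-- The vertex-cover number of the `k`-graph `F` on `[n]`. -/
noncomputable def coverNum (n : ℕ) (F : Finset (Finset ℕ)) : ℕ :=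
  sInf {t | ∃ T ⊆ Finset.Icc 1 n, T.card = t ∧ ∀ A ∈ F, (A ∩ T).Nonempty}

/-- The link `N_F(x)`. -/
def nbr (F : Finset (Finset ℕ)) (x : ℕ) : Finset (Finset ℕ) :=
  (F.filter fun A => x ∈ A).image fun A => A.erase x

/-- The link `N_F(x,y)`. -/
def nbr2 (F : Finset (Finset ℕ)) (x y : ℕ) : Finset (Finset ℕ) :=
  (F.filter fun A => x ∈ A ∧ y ∈ A).image fun A => (A.erase x).erase y

/-- The link `N_F(x, ȳ)`. -/
def nbrBar (F : Finset (Finset ℕ)) (x y : ℕ) : Finset (Finset ℕ) :=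
  (F.filter fun A => x ∈ A ∧ y ∉ A).image fun A => A.erase x

/-- The extremal family `E₀(n,k,s)`. -/
def E0 (n k s : ℕ) : Finset (Finset ℕ) :=
  Finset.powersetCard k (Finset.Icc 1 (k * s + k - 2)) ∪
  ((Finset.powersetCard k (Finset.Icc 1 n)).filter
    (fun A => A \ Finset.Icc 1 (k * s + k - 2) = {k * s + k - 1} ∧
      (A ∩ Finset.Icc 1 (k - 1)).Nonempty)) ∪
  ((Finset.Icc (k * s + k) n).image (fun x => insert x (Finset.Icc 1 (k - 1))))

open Classical in
/-- The extremal family `E₁(n,k,s)`. -/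
noncomputable def E1 (n k s : ℕ) : Finset (Finset ℕ) :=
  Finset.powersetCard k (Finset.Icc 1 (k * s + k - 2)) ∪
  ((Finset.powersetCard k (Finset.Icc 1 n)).filter
    (fun A => 1 ∈ A ∧ ∃ x ∈ Finset.Icc (k * s + k - 1) n,
      A \ Finset.Icc 1 (k * s + k - 2) = {x}))

/-- `F` is `s`-saturated on `[n]`. -/
def Saturated (n k s : ℕ) (F : Finset (Finset ℕ)) : Prop :=
  matchingNumber F ≤ s ∧
  ∀ G ∈ Finset.powersetCard k (Finset.Icc 1 n), G ∉ F →
    matchingNumber (insert G F) = s + 1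


private lemma shiftEdge_injOn (x y : ℕ) (F : Finset (Finset ℕ)) :
    Set.InjOn (shiftEdge x y F) F := by
  intro A hA B hB hAB
  simp only [Finset.mem_coe] at hA hB
  unfold shiftEdge at hAB
  split_ifs at hAB with h1 h2 h2
  · have hA2 : A = insert y ((insert x (A.erase y)).erase x) := by
      rw [Finset.erase_insert (by simp [h1.2.1]), Finset.insert_erase h1.1]
    have hB2 : B = insert y ((insert x (B.erase y)).erase x) := by
      rw [Finset.erase_insert (by simp [h2.2.1]), Finset.insert_erase h2.1]
    rw [hA2, hB2, hAB]
  · rw [← hAB] at hB; exact absurd hB h1.2.2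
  · rw [hAB] at hA; exact absurd hA h2.2.2
  · exact hAB

lemma nbr_card_eq (F : Finset (Finset ℕ)) (i : ℕ) :
    (nbr F i).card = (F.filter fun A => i ∈ A).card := by
  apply Finset.card_image_of_injOn
  intro A hA B hB h
  simp only [Finset.coe_filter, Set.mem_setOf_eq] at hA hB
  have := congrArg (insert i) h
  rwa [Finset.insert_erase hA.2, Finset.insert_erase hB.2] at this


/-- a meaningful shift strictly increases the sum of squared degrees. -/
theorem stmt4 (n k x y : ℕ) (F : Finset (Finset ℕ))
    (hF : F ⊆ Finset.powersetCard k (Finset.Icc 1 n))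
    (hx : 1 ≤ x) (hxy : x < y) (hy : y ≤ n)
    (hdeg : (nbr F y).card ≤ (nbr F x).card)
    (hne : shiftFam x y F ≠ F) :
    ∑ i ∈ Finset.Icc 1 n, (nbr F i).card ^ 2 <
      ∑ i ∈ Finset.Icc 1 n, (nbr (shiftFam x y F) i).card ^ 2 := by
  classical
  have hxyne : x ≠ y := hxy.ne
  set M : Finset (Finset ℕ) :=
    F.filter (fun A => y ∈ A ∧ x ∉ A ∧ insert x (A.erase y) ∉ F) with hM
  -- degrees of shifted family as filtered cards over F
  have hfilt : ∀ (p : Finset ℕ → Prop) [DecidablePred p],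
      ((shiftFam x y F).filter p).card = (F.filter fun A => p (shiftEdge x y F A)).card := by
    intro p _
    rw [shiftFam, Finset.filter_image]
    exact Finset.card_image_of_injOn ((shiftEdge_injOn x y F).mono (by
      intro A hA; simp only [Finset.coe_filter, Set.mem_setOf_eq, Finset.mem_coe] at hA ⊢
      exact hA.1))
  -- t ≥ 1
  have hMne : M.Nonempty := by
    rcases Finset.eq_empty_or_nonempty M with h | h
    · exfalso; apply hne
      rw [shiftFam]
      have : ∀ A ∈ F, shiftEdge x y F A = A := by
        intro A hA
        unfold shiftEdge
        rw [if_neg]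
        intro hc
        have : A ∈ M := Finset.mem_filter.mpr ⟨hA, hc⟩
        rw [h] at this; exact absurd this (Finset.notMem_empty A)
      rw [Finset.image_congr (fun A hA => this A hA), Finset.image_id']
    · exact h
  -- degree at i ≠ x, y unchanged
  have htail : ∀ i, i ≠ x → i ≠ y →
      (nbr (shiftFam x y F) i).card = (nbr F i).card := by
    intro i hix hiy
    rw [nbr_card_eq, nbr_card_eq, hfilt]
    congr 1
    apply Finset.filter_congr
    intro A hA
    unfold shiftEdge
    split <;> simp [hix, hiy]
  -- degree at x
  have hdx : (nbr (shiftFam x y F) x).card = (nbr F x).card + M.card := by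
    rw [nbr_card_eq, nbr_card_eq, hfilt]
    have : F.filter (fun A => x ∈ shiftEdge x y F A)
        = (F.filter fun A => x ∈ A) ∪ M := by
      ext A
      simp only [Finset.mem_filter, Finset.mem_union, hM]
      unfold shiftEdge
      constructor
      · rintro ⟨hA, hxs⟩
        by_cases hc : y ∈ A ∧ x ∉ A ∧ insert x (A.erase y) ∉ F
        · exact Or.inr ⟨hA, hc⟩
        · rw [if_neg hc] at hxs; exact Or.inl ⟨hA, hxs⟩
      · rintro (⟨hA, hxA⟩ | ⟨hA, hc⟩)
        · refine ⟨hA, ?_⟩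
          rw [if_neg (fun hc => hc.2.1 hxA)]; exact hxA
        · exact ⟨hA, by rw [if_pos hc]; exact Finset.mem_insert_self x _⟩
    have hdisj : Disjoint (F.filter fun A => x ∈ A) M := by
      rw [Finset.disjoint_left]
      intro A hA1 hA2
      simp only [Finset.mem_filter, hM] at hA1 hA2
      exact hA2.2.2.1 hA1.2
    rw [this, Finset.card_union_of_disjoint hdisj]
  -- degree at y
  have hdy : (nbr (shiftFam x y F) y).card + M.card = (nbr F y).card := by
    rw [nbr_card_eq, nbr_card_eq, hfilt]
    have : F.filter (fun A => y ∈ shiftEdge x y F A)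
        = (F.filter fun A => y ∈ A) \ M := by
      ext A
      simp only [Finset.mem_filter, Finset.mem_sdiff, hM]
      unfold shiftEdge
      constructor
      · rintro ⟨hA, hys⟩
        by_cases hc : y ∈ A ∧ x ∉ A ∧ insert x (A.erase y) ∉ F
        · rw [if_pos hc] at hys
          simp [hxyne.symm] at hys
        · rw [if_neg hc] at hys
          exact ⟨⟨hA, hys⟩, by simp [hc]⟩
      · rintro ⟨⟨hA, hyA⟩, hnc⟩
        refine ⟨hA, ?_⟩
        rw [if_neg (fun hc => hnc ⟨hA, hc⟩)]
        exact hyA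
    rw [this]
    apply Finset.card_sdiff_add_card_eq_card
    intro A hA
    simp only [Finset.mem_filter, hM] at hA ⊢
    exact ⟨hA.1, hA.2.1⟩
  -- split sums
  have hxmem : x ∈ Finset.Icc 1 n := Finset.mem_Icc.mpr ⟨hx, le_trans hxy.le hy⟩
  have hymem : y ∈ (Finset.Icc 1 n).erase x :=
    Finset.mem_erase.mpr ⟨hxyne.symm, Finset.mem_Icc.mpr ⟨le_trans hx hxy.le, hy⟩⟩
  have hsplit : ∀ f : ℕ → ℕ, ∑ i ∈ Finset.Icc 1 n, f i
      = f x + (f y + ∑ i ∈ ((Finset.Icc 1 n).erase x).erase y, f i) := by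
    intro f
    rw [Finset.add_sum_erase _ f hymem, Finset.add_sum_erase _ f hxmem]
  rw [hsplit, hsplit]
  have htails : ∑ i ∈ ((Finset.Icc 1 n).erase x).erase y, (nbr (shiftFam x y F) i).card ^ 2
      = ∑ i ∈ ((Finset.Icc 1 n).erase x).erase y, (nbr F i).card ^ 2 := by
    apply Finset.sum_congr rfl
    intro i hi
    simp only [Finset.mem_erase] at hi
    rw [htail i hi.2.1 hi.1]
  rw [htails]
  have ht1 : 1 ≤ M.card := Finset.card_pos.mpr hMne
  set a := (nbr F x).card
  set b := (nbr F y).card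
  set c := (nbr (shiftFam x y F) y).card
  set t := M.card
  rw [hdx]
  nlinarith [sq_nonneg (a - b), hdy, hdeg, ht1]
end

section
/- Let k ≥ 2 and s ≥ 2 be integers and let F ⊆ binom([n],k) be a k-graph with ν(F) ≤ s. Suppose U ⊆ [n] satisfies |U| = ks + k − 2 and every k-element subset of U belongs to F. Let i, j ∈ [n] ∖ U with i ≠ j, and let F_i, F_j ∈ F be edges with i ∈ F_i, j ∈ F_j, F_i ∖ {i} ⊆ U and F_j ∖ {j} ⊆ U. Then F_i ∩ F_j ≠ ∅; that is, the families N_F(i) and N_F(j) are cross-intersecting. -/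
/-
If `Fᵢ` and `Fⱼ` were disjoint then, as `i, j ∉ U`, they would use only `2(k - 1)` vertices of the
clique `U`. The other `k(s - 1)` vertices of `U` split into `s - 1` disjoint edges of the clique,
which together with `Fᵢ` and `Fⱼ` form a matching of size `s + 1`.
-/

open Finset

lemma exists_pairwiseDisjoint_subset_powersetCard {α : Type*} [DecidableEq α] {k : ℕ}
    (hk : 0 < k) (m : ℕ) {V : Finset α} (hV : k * m ≤ #V) :
    ∃ M ⊆ V.powersetCard k, #M = m ∧ (M : Set (Finset α)).PairwiseDisjoint id := by
  induction m generalizing V with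
  | zero => exact ⟨∅, empty_subset _, rfl, by simp⟩
  | succ m ih =>
    rw [Nat.mul_succ] at hV
    obtain ⟨A, hAV, hAcard⟩ := exists_subset_card_eq (le_of_add_le_right hV)
    obtain ⟨M, hMV, hMcard, hMdisj⟩ := ih (V := V \ A) (by
      rw [card_sdiff_of_subset hAV, hAcard]; omega)
    have hdisjA : ∀ B ∈ M, Disjoint A B := fun B hB =>
      disjoint_of_subset_right (mem_powersetCard.1 (hMV hB)).1 disjoint_sdiff
    have hAM : A ∉ M := fun hA =>
      (card_pos.1 (hAcard ▸ hk)).ne_empty (disjoint_self.1 (hdisjA A hA))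
    refine ⟨insert A M, insert_subset (mem_powersetCard.2 ⟨hAV, hAcard⟩) ?_, ?_, ?_⟩
    · exact hMV.trans (powersetCard_mono sdiff_subset)
    · rw [card_insert_of_notMem hAM, hMcard]
    · rw [coe_insert]
      exact hMdisj.insert fun B hB _ => hdisjA B hB

lemma card_le_matchingNumber {F M : Finset (Finset ℕ)} (hMF : M ⊆ F)
    (hM : (M : Set (Finset ℕ)).PairwiseDisjoint id) : #M ≤ matchingNumber F :=
  le_csSup ⟨#F, by rintro _ ⟨N, hN, rfl, -⟩; exact card_le_card hN⟩ ⟨M, hMF, rfl, hM⟩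

lemma card_add_card_div_le_matchingNumber {F M : Finset (Finset ℕ)} {W : Finset ℕ} {k : ℕ}
    (hk : 0 < k) (hMF : M ⊆ F) (hM : (M : Set (Finset ℕ)).PairwiseDisjoint id)
    (hWF : W.powersetCard k ⊆ F) (hMW : ∀ A ∈ M, Disjoint A W) :
    #M + #W / k ≤ matchingNumber F := by
  obtain ⟨N, hNW, hNcard, hNdisj⟩ :=
    exists_pairwiseDisjoint_subset_powersetCard hk (#W / k) (Nat.mul_div_le #W k)
  have hsubW : ∀ B ∈ N, B ⊆ W ∧ #B = k := fun B hB => mem_powersetCard.1 (hNW hB)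
  have hMN : Disjoint M N := disjoint_left.2 fun A hAM hAN =>
    (card_pos.1 ((hsubW A hAN).2 ▸ hk)).ne_empty
      (disjoint_self.1 (disjoint_of_subset_right (hsubW A hAN).1 (hMW A hAM)))
  rw [← hNcard, ← card_union_of_disjoint hMN]
  refine card_le_matchingNumber (union_subset hMF (hNW.trans hWF)) ?_
  rw [coe_union]
  exact hM.union hNdisj fun A hA B hB _ => disjoint_of_subset_right (hsubW B hB).1 (hMW A hA)

lemma two_add_card_div_le_matchingNumber {F : Finset (Finset ℕ)} {A B W : Finset ℕ} {k : ℕ}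
    (hk : 0 < k) (hA : A ∈ F) (hB : B ∈ F) (hAne : A.Nonempty) (hAB : Disjoint A B)
    (hWF : W.powersetCard k ⊆ F) (hW : Disjoint (A ∪ B) W) :
    2 + #W / k ≤ matchingNumber F := by
  have hpair : #({A, B} : Finset (Finset ℕ)) = 2 :=
    card_pair fun h => hAne.ne_empty (disjoint_self.1 (h ▸ hAB))
  have hpairDisj : (({A, B} : Finset (Finset ℕ)) : Set (Finset ℕ)).PairwiseDisjoint id := by
    rw [coe_pair]
    exact (Set.pairwiseDisjoint_singleton B id).insert fun C hC _ =>
      Set.mem_singleton_iff.1 hC ▸ hAB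
  refine hpair ▸ card_add_card_div_le_matchingNumber hk (by simp [insert_subset_iff, hA, hB])
    hpairDisj hWF fun C hC => hW.mono_left ?_
  rcases mem_insert.1 hC with hC | hC
  exacts [hC ▸ subset_union_left, mem_singleton.1 hC ▸ subset_union_right]

lemma card_sdiff_union_add_add_of_erase_subset {α : Type*} [DecidableEq α] {U A B : Finset α}
    {a b : α} (hAB : Disjoint A B) (ha : a ∈ A) (hb : b ∈ B) (haU : a ∉ U) (hbU : b ∉ U)
    (hAU : A.erase a ⊆ U) (hBU : B.erase b ⊆ U) :
    #(U \ (A ∪ B)) + (#A - 1) + (#B - 1) = #U := by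
  have hrest : U \ (A ∪ B) = U \ (A.erase a ∪ B.erase b) := by
    ext x; by_cases hxa : x = a <;> by_cases hxb : x = b <;> simp_all
  rw [hrest, ← card_erase_of_mem ha, ← card_erase_of_mem hb, add_assoc,
    ← card_union_of_disjoint (hAB.mono (erase_subset a A) (erase_subset b B)),
    card_sdiff_add_card_eq_card (union_subset hAU hBU)]

theorem stmt14_general (n k s : ℕ) (hk : 2 ≤ k) (hs : 2 ≤ s)
    (F : Finset (Finset ℕ)) (hF : F ⊆ Finset.powersetCard k (Finset.Icc 1 n))
    (hnu : matchingNumber F ≤ s)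
    (U : Finset ℕ) (hUcard : U.card = k * s + k - 2)
    (hclique : Finset.powersetCard k U ⊆ F)
    (i j : ℕ)
    (hiU : i ∉ U) (hjU : j ∉ U)
    (Fi Fj : Finset ℕ) (hFi : Fi ∈ F) (hFj : Fj ∈ F)
    (hiFi : i ∈ Fi) (hjFj : j ∈ Fj)
    (hFiU : Fi.erase i ⊆ U) (hFjU : Fj.erase j ⊆ U) :
    (Fi ∩ Fj).Nonempty := by
  by_contra hne
  have hdisj : Disjoint Fi Fj := disjoint_iff_inter_eq_empty.2 (not_nonempty_iff_eq_empty.1 hne)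
  have hrest := card_sdiff_union_add_add_of_erase_subset hdisj hiFi hjFj hiU hjU hFiU hFjU
  rw [(mem_powersetCard.1 (hF hFi)).2, (mem_powersetCard.1 (hF hFj)).2, hUcard] at hrest
  have hWcard : #(U \ (Fi ∪ Fj)) = k * (s - 1) := by
    have hks : k ≤ k * s := Nat.le_mul_of_pos_right k (by omega)
    rw [Nat.mul_sub_one]
    omega
  have hmatch := two_add_card_div_le_matchingNumber (by omega) hFi hFj ⟨i, hiFi⟩ hdisj
    (powersetCard_mono sdiff_subset |>.trans hclique) disjoint_sdiff
  rw [hWcard, Nat.mul_div_cancel_left _ (by omega)] at hmatch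
  omega

/-- links of outside vertices are cross-intersecting. -/
theorem stmt14 (n k s : ℕ) (hk : 2 ≤ k) (hs : 2 ≤ s)
    (F : Finset (Finset ℕ)) (hF : F ⊆ Finset.powersetCard k (Finset.Icc 1 n))
    (hnu : matchingNumber F ≤ s)
    (U : Finset ℕ) (hU : U ⊆ Finset.Icc 1 n) (hUcard : U.card = k * s + k - 2)
    (hclique : Finset.powersetCard k U ⊆ F)
    (i j : ℕ) (hi : i ∈ Finset.Icc 1 n) (hj : j ∈ Finset.Icc 1 n)
    (hiU : i ∉ U) (hjU : j ∉ U) (hij : i ≠ j)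
    (Fi Fj : Finset ℕ) (hFi : Fi ∈ F) (hFj : Fj ∈ F)
    (hiFi : i ∈ Fi) (hjFj : j ∈ Fj)
    (hFiU : Fi.erase i ⊆ U) (hFjU : Fj.erase j ⊆ U) :
    (Fi ∩ Fj).Nonempty :=
  stmt14_general n k s hk hs F hF hnu U hUcard hclique i j hiU hjU Fi Fj hFi hFj hiFi hjFj hFiU hFjU
end
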